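/- arXiv:1707.05966 — 2 statements merged into one kernel-verified Lean document; each statement's English description precedes it below -/
import Mathlib

section
/- Let n ≥ 1 and s ∈ ℕ ∪ {0}. There exists a constant C ≥ 1 such that for every ball B = B(c_B, r_B) ⊂ ℝ^n with r_B < 1 and |c_B| < 1/r_B, one has C^{-1}‖χ_B‖_{L^{φ_0}} ≤ ‖χ_B‖_{L^{Φ_1}} ≤ C‖χ_B‖_{L^{φ_0}}; consequently, if a is a (Φ_1,∞,s)-atom associated with such a ball B, then C^{-1}a is a (φ_0,∞,s)-atom associated with the same ball B. -/
open MeasureTheory Real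
open scoped ENNReal Classical

noncomputable section

/-- `ℝⁿ` as a Euclidean space. -/
abbrev Rn (n : ℕ) := EuclideanSpace ℝ (Fin n)

/-- The Musielak-Orlicz growth function `Φ_p`. -/
def Phi (n : ℕ) (p : ℝ) (x : Rn n) (t : ℝ) : ℝ :=
  if ∃ k : ℕ, (n : ℝ) * (1 / p - 1) = (k : ℝ) then
    t / (Real.log (Real.exp 1 + t) +
      (t * (1 + ‖x‖) ^ (n : ℝ)) ^ (1 - p) * (Real.log (Real.exp 1 + ‖x‖)) ^ p)
  else
    t / (Real.log (Real.exp 1 + t) + (t * (1 + ‖x‖) ^ (n : ℝ)) ^ (1 - p))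

/-- The Orlicz function `φ₀(t) = t / log(e+t)`. -/
def phi0 (t : ℝ) : ℝ := t / Real.log (Real.exp 1 + t)

/-- The weight `W_p`. -/
def Wp (n : ℕ) (p : ℝ) (x : Rn n) : ℝ :=
  if p = 1 then 1 / Real.log (Real.exp 1 + ‖x‖)
  else if ∃ k : ℕ, (n : ℝ) * (1 / p - 1) = (k : ℝ) then
    (1 + ‖x‖) ^ (-(n : ℝ) * (1 - p)) * (Real.log (Real.exp 1 + ‖x‖)) ^ (-p)
  else (1 + ‖x‖) ^ (-(n : ℝ) * (1 - p))

/-- Extension of `Φ_p(x, ·)` to `ℝ≥0∞`. -/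
def PhiE (n : ℕ) (p : ℝ) (x : Rn n) (t : ℝ≥0∞) : ℝ≥0∞ :=
  if t = ⊤ then ⊤ else ENNReal.ofReal (Phi n p x t.toReal)

/-- Extension of `φ₀` to `ℝ≥0∞`. -/
def phi0E (t : ℝ≥0∞) : ℝ≥0∞ :=
  if t = ⊤ then ⊤ else ENNReal.ofReal (phi0 t.toReal)

/-- The Luxemburg quasi-norm `‖·‖_{L^{Φ_p}}`. -/
def luxPhiNorm (n : ℕ) (p : ℝ) (F : Rn n → ℝ≥0∞) : ℝ≥0∞ :=
  sInf {lam : ℝ≥0∞ | 0 < lam ∧ (∫⁻ x : Rn n, PhiE n p x (F x / lam)) ≤ 1}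

/-- The Luxemburg norm `‖·‖_{L^{φ₀}}`. -/
def luxPhi0Norm (n : ℕ) (F : Rn n → ℝ≥0∞) : ℝ≥0∞ :=
  sInf {lam : ℝ≥0∞ | 0 < lam ∧ (∫⁻ x : Rn n, phi0E (F x / lam)) ≤ 1}

/-- The weighted quasi-norm `‖·‖_{L^p_{W_p}}`. -/
def wNorm (n : ℕ) (p : ℝ) (F : Rn n → ℝ≥0∞) : ℝ≥0∞ :=
  (∫⁻ x : Rn n, F x ^ p * ENNReal.ofReal (Wp n p x)) ^ (1 / p)

/-- The weighted norm `‖·‖_{L^1_{W_1}}`. -/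
def w1Norm (n : ℕ) (F : Rn n → ℝ≥0∞) : ℝ≥0∞ :=
  ∫⁻ x : Rn n, F x * ENNReal.ofReal (Wp n 1 x)

/-- The characteristic function of a set, `ℝ≥0∞`-valued. -/
def chi (n : ℕ) (B : Set (Rn n)) : Rn n → ℝ≥0∞ := B.indicator fun _ => 1


/-- An `(X, ∞, s)`-atom associated with the set `B`, where `normB` is `‖χ_B‖_X`:
a measurable function supported in `B`, bounded by `‖χ_B‖_X⁻¹`, with vanishing
moments up to order `s`. -/
def IsAtom' (n s : ℕ) (normB : ℝ≥0∞) (B : Set (Rn n)) (a : Rn n → ℂ) : Prop :=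
  Measurable a ∧ (∀ x, x ∉ B → a x = 0) ∧
  (∀ᵐ x : Rn n, (‖a x‖₊ : ℝ≥0∞) ≤ normB⁻¹) ∧
  ∀ α : Fin n → ℕ, (∑ i, α i) ≤ s →
    (∫ x : Rn n, a x * ∏ i, ((x i : ℝ) : ℂ) ^ (α i)) = 0

/-! On an admissible ball `B = B(c, r)` one has `|x| < 2 / r` and `|B| ≲ r ^ n ≤ r`, so the
extra term `log (e + |x|)` in `Φ₁(x, t)` is at most a constant plus `log (1 / |B|)`. For
`t ≳ 1 / |B|` this is dominated by `log (e + t)`, which gives `φ₀(t / C) ≤ Φ₁(x, t)` on `B`;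
for smaller `t` the bound `φ₀(t) ≤ t` alone keeps the Luxemburg integral of `χ_B` below `1`.
Hence `‖χ_B‖_{φ₀} ≤ C ‖χ_B‖_{Φ₁}`, while `Φ₁ ≤ φ₀` gives the other inequality; dividing an
atom by `C` then fixes its `L^∞` bound. -/

lemma one_le_log_exp_one_add {t : ℝ} (ht : 0 ≤ t) : 1 ≤ log (exp 1 + t) := by
  calc 1 = log (exp 1) := (log_exp 1).symm
    _ ≤ log (exp 1 + t) := log_le_log (exp_pos 1) (by linarith)

lemma log_le_half_self {C : ℝ} (hC : 0 < C) : log C ≤ C / 2 := by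
  have h := log_le_sub_one_of_pos (half_pos hC)
  rw [log_div hC.ne' two_ne_zero] at h
  linarith [log_two_lt_d9]

lemma log_add_log_le_mul_log {A C s y : ℝ} (hA : 0 ≤ A) (hC : 2 * A + 4 ≤ C) (hs : 0 ≤ s)
    (hy : log (exp 1 + y) ≤ A + log (exp 1 + s / C)) :
    log (exp 1 + s) + log (exp 1 + y) ≤ C * log (exp 1 + s / C) := by
  have hC0 : 0 < C := by linarith
  set L := log (exp 1 + s / C)
  have hL : 1 ≤ L := one_le_log_exp_one_add (div_nonneg hs hC0.le)
  have hs' : log (exp 1 + s) ≤ log C + L := by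
    rw [← log_mul hC0.ne' (by positivity)]
    refine log_le_log (by positivity) ?_
    rw [mul_add, mul_div_cancel₀ s hC0.ne']
    nlinarith [exp_pos 1]
  nlinarith [log_le_half_self hC0]

lemma log_exp_one_add_norm_le_of_mem_ball {E : Type*} [SeminormedAddCommGroup E] {c x : E}
    {r : ℝ} (hr1 : r < 1) (hc : ‖c‖ < 1 / r) (hx : x ∈ Metric.ball c r) :
    log (exp 1 + ‖x‖) ≤ log (exp 1 + 2) + log r⁻¹ := by
  have hr0 : 0 < r := Metric.pos_of_mem_ball hx
  have hxr : ‖x‖ < r⁻¹ + 1 := by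
    have := norm_le_norm_add_norm_sub' x c
    rw [← dist_eq_norm] at this
    rw [one_div] at hc
    linarith [Metric.mem_ball.1 hx]
  have hr : 1 < r⁻¹ := (one_lt_inv₀ hr0).2 hr1
  rw [← log_mul (by positivity) (by positivity)]
  refine log_le_log (by positivity) ?_
  nlinarith [exp_pos 1]

lemma measure_ball_le_ofReal_mul {E : Type*} [NormedAddCommGroup E] [NormedSpace ℝ E]
    [MeasurableSpace E] [BorelSpace E] [FiniteDimensional ℝ E] (μ : Measure E)
    [μ.IsAddHaarMeasure] (hE : 0 < Module.finrank ℝ E) (c : E) {r : ℝ} (hr0 : 0 ≤ r)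
    (hr1 : r ≤ 1) : μ (Metric.ball c r) ≤ ENNReal.ofReal r * μ (Metric.ball 0 1) := by
  have : Nontrivial E := Module.nontrivial_of_finrank_pos (R := ℝ) hE
  rw [Measure.addHaar_ball μ c hr0]
  gcongr
  exact pow_le_of_le_one hr0 hr1 hE.ne'

/-- `log (e + 2)` comes from `|x| < 2 / r` on the ball, `|log |B(0,1)||` from
`|B(c,r)| ≤ r |B(0,1)|`. -/
def ballLogConst (n : ℕ) : ℝ :=
  log (exp 1 + 2) + |log (volume (Metric.ball (0 : Rn n) 1)).toReal|

def atomConst (n : ℕ) : ℝ := 2 * ballLogConst n + 4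

lemma ballLogConst_nonneg (n : ℕ) : 0 ≤ ballLogConst n :=
  add_nonneg (log_nonneg (by linarith [add_one_le_exp 1])) (abs_nonneg _)

lemma one_le_atomConst (n : ℕ) : 1 ≤ atomConst n := by
  unfold atomConst
  linarith [ballLogConst_nonneg n]

lemma atomConst_pos (n : ℕ) : 0 < atomConst n := zero_lt_one.trans_le (one_le_atomConst n)

lemma log_exp_one_add_norm_le_of_inv_measure_ball_le {n : ℕ} (hn : 1 ≤ n) {c x : Rn n} {r : ℝ}
    (hr1 : r < 1) (hc : ‖c‖ < 1 / r) (hx : x ∈ Metric.ball c r) {s : ℝ}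
    (hs : (volume (Metric.ball c r)).toReal⁻¹ ≤ s) :
    log (exp 1 + ‖x‖) ≤ ballLogConst n + log (exp 1 + s) := by
  have hr0 : 0 < r := Metric.pos_of_mem_ball hx
  set V := (volume (Metric.ball c r)).toReal
  set v := (volume (Metric.ball (0 : Rn n) 1)).toReal
  have hV : 0 < V :=
    ENNReal.toReal_pos (Metric.measure_ball_pos _ _ hr0).ne' measure_ball_lt_top.ne
  have hv : 0 < v :=
    ENNReal.toReal_pos (Metric.measure_ball_pos _ _ one_pos).ne' measure_ball_lt_top.ne
  have hVr : V ≤ r * v := by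
    have h := measure_ball_le_ofReal_mul (volume : Measure (Rn n))
      (by rw [finrank_euclideanSpace_fin]; exact hn) c hr0.le hr1.le
    have h' := ENNReal.toReal_mono (ENNReal.mul_ne_top ENNReal.ofReal_ne_top
      measure_ball_lt_top.ne) h
    rwa [ENNReal.toReal_mul, ENNReal.toReal_ofReal hr0.le] at h'
  have hlogr : log r⁻¹ ≤ |log v| + log (exp 1 + s) :=
    calc log r⁻¹ ≤ log (v * V⁻¹) := by
          refine log_le_log (inv_pos.2 hr0) ?_
          rw [inv_le_iff_one_le_mul₀ hr0, mul_right_comm, ← div_eq_mul_inv, le_div_iff₀ hV]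
          linarith
      _ = log v + log V⁻¹ := log_mul hv.ne' (inv_pos.2 hV).ne'
      _ ≤ |log v| + log (exp 1 + s) :=
          add_le_add (le_abs_self _) (log_le_log (inv_pos.2 hV) (by linarith [exp_pos 1]))
  have := log_exp_one_add_norm_le_of_mem_ball hr1 hc hx
  unfold ballLogConst
  linarith

lemma Phi_one (n : ℕ) (x : Rn n) (t : ℝ) :
    Phi n 1 x t = t / (log (exp 1 + t) + log (exp 1 + ‖x‖)) := by
  rw [Phi, if_pos ⟨0, by norm_num⟩]
  norm_num

lemma Phi_one_le_phi0 (n : ℕ) (x : Rn n) {t : ℝ} (ht : 0 ≤ t) : Phi n 1 x t ≤ phi0 t := by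
  rw [Phi_one, phi0]
  have hx := one_le_log_exp_one_add (norm_nonneg x)
  exact div_le_div_of_nonneg_left ht (by linarith [one_le_log_exp_one_add ht]) (by linarith)

lemma phi0_le_self {t : ℝ} (ht : 0 ≤ t) : phi0 t ≤ t :=
  div_le_self ht (one_le_log_exp_one_add ht)

lemma phi0_div_atomConst_le_Phi_one {n : ℕ} (hn : 1 ≤ n) {c x : Rn n} {r : ℝ} (hr1 : r < 1)
    (hc : ‖c‖ < 1 / r) (hx : x ∈ Metric.ball c r) {s : ℝ}
    (hs : (volume (Metric.ball c r)).toReal⁻¹ ≤ s / atomConst n) :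
    phi0 (s / atomConst n) ≤ Phi n 1 x s := by
  have hC := atomConst_pos n
  have hs0 : 0 ≤ s := by
    have h := mul_nonneg ((inv_nonneg.2 ENNReal.toReal_nonneg).trans hs) hC.le
    rwa [div_mul_cancel₀ s hC.ne'] at h
  rw [Phi_one, phi0, div_div]
  refine div_le_div_of_nonneg_left hs0 ?_ ?_
  · linarith [one_le_log_exp_one_add hs0, one_le_log_exp_one_add (norm_nonneg x)]
  · exact log_add_log_le_mul_log (ballLogConst_nonneg n) le_rfl hs0
      (log_exp_one_add_norm_le_of_inv_measure_ball_le hn hr1 hc hx hs)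

lemma phi0E_le_self (t : ℝ≥0∞) : phi0E t ≤ t := by
  by_cases ht : t = ⊤
  · simp [ht]
  rw [phi0E, if_neg ht, ENNReal.ofReal_le_iff_le_toReal ht]
  exact phi0_le_self ENNReal.toReal_nonneg

lemma PhiE_one_le_phi0E (n : ℕ) (x : Rn n) (t : ℝ≥0∞) : PhiE n 1 x t ≤ phi0E t := by
  by_cases ht : t = ⊤
  · simp [PhiE, phi0E, ht]
  rw [PhiE, phi0E, if_neg ht, if_neg ht]
  exact ENNReal.ofReal_le_ofReal (Phi_one_le_phi0 n x ENNReal.toReal_nonneg)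

lemma phi0E_div_atomConst_le_PhiE_one {n : ℕ} (hn : 1 ≤ n) {c x : Rn n} {r : ℝ}
    (hr1 : r < 1) (hc : ‖c‖ < 1 / r) (hx : x ∈ Metric.ball c r) {t : ℝ≥0∞}
    (ht : (volume (Metric.ball c r))⁻¹ ≤ t / ENNReal.ofReal (atomConst n)) :
    phi0E (t / ENNReal.ofReal (atomConst n)) ≤ PhiE n 1 x t := by
  have hC := atomConst_pos n
  by_cases htop : t = ⊤
  · simp [htop, PhiE]
  have hne : t / ENNReal.ofReal (atomConst n) ≠ ⊤ :=
    ENNReal.div_ne_top htop (ENNReal.ofReal_pos.2 hC).ne'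
  have hs := ENNReal.toReal_mono hne ht
  rw [ENNReal.toReal_inv, ENNReal.toReal_div, ENNReal.toReal_ofReal hC.le] at hs
  rw [phi0E, if_neg hne, PhiE, if_neg htop, ENNReal.toReal_div, ENNReal.toReal_ofReal hC.le]
  exact ENNReal.ofReal_le_ofReal (phi0_div_atomConst_le_Phi_one hn hr1 hc hx hs)

lemma lintegral_comp_chi_div {n : ℕ} {B : Set (Rn n)} (hB : MeasurableSet B)
    (f : Rn n → ℝ≥0∞ → ℝ≥0∞) (hf : ∀ x, f x 0 = 0) (lam : ℝ≥0∞) :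
    ∫⁻ x, f x (chi n B x / lam) = ∫⁻ x in B, f x lam⁻¹ := by
  rw [← lintegral_indicator hB]
  congr 1 with x
  by_cases hx : x ∈ B <;> simp [chi, hx, hf]

lemma lintegral_phi0E_chi_ball_le_one {n : ℕ} (hn : 1 ≤ n) {c : Rn n} {r : ℝ} (hr1 : r < 1)
    (hc : ‖c‖ < 1 / r) {lam : ℝ≥0∞}
    (h : ∫⁻ x, PhiE n 1 x (chi n (Metric.ball c r) x / lam) ≤ 1) :
    ∫⁻ x, phi0E (chi n (Metric.ball c r) x / (ENNReal.ofReal (atomConst n) * lam)) ≤ 1 := by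
  set B := Metric.ball c r
  set C := ENNReal.ofReal (atomConst n)
  have hC : C ≠ 0 := (ENNReal.ofReal_pos.2 (atomConst_pos n)).ne'
  have hB : MeasurableSet B := measurableSet_ball
  rw [lintegral_comp_chi_div hB _ (fun x => by simp [PhiE, Phi_one])] at h
  rw [lintegral_comp_chi_div hB (fun _ => phi0E) (fun _ => by simp [phi0E, phi0]),
    ENNReal.mul_inv (Or.inl hC) (Or.inl ENNReal.ofReal_ne_top), mul_comm, ← div_eq_mul_inv,
    setLIntegral_const]
  rcases le_or_gt (volume B)⁻¹ (lam⁻¹ / C) with hlarge | hsmall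
  · calc phi0E (lam⁻¹ / C) * volume B = ∫⁻ _ in B, phi0E (lam⁻¹ / C) :=
          (setLIntegral_const _ _).symm
      _ ≤ ∫⁻ x in B, PhiE n 1 x lam⁻¹ := setLIntegral_mono' hB fun x hx =>
          phi0E_div_atomConst_le_PhiE_one hn hr1 hc hx hlarge
      _ ≤ 1 := h
  · calc phi0E (lam⁻¹ / C) * volume B ≤ lam⁻¹ / C * volume B := by
          gcongr; exact phi0E_le_self _
      _ ≤ (volume B)⁻¹ * volume B := by gcongr
      _ ≤ 1 := by rw [mul_comm]; exact ENNReal.mul_inv_le_one _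

lemma sInf_le_mul_sInf_of_mul_mem {S T : Set ℝ≥0∞} {k : ℝ≥0∞} (hk0 : k ≠ 0) (hk : k ≠ ⊤)
    (h : ∀ t ∈ T, k * t ∈ S) : sInf S ≤ k * sInf T := by
  rw [mul_comm, ← ENNReal.div_le_iff hk0 hk]
  refine le_sInf fun t ht => ?_
  rw [ENNReal.div_le_iff hk0 hk, mul_comm]
  exact sInf_le (h t ht)

lemma luxPhiNorm_one_le_luxPhi0Norm (n : ℕ) (F : Rn n → ℝ≥0∞) :
    luxPhiNorm n 1 F ≤ luxPhi0Norm n F :=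
  sInf_le_sInf fun _ ⟨hpos, hint⟩ =>
    ⟨hpos, (lintegral_mono fun x => PhiE_one_le_phi0E n x _).trans hint⟩

lemma luxPhi0Norm_chi_ball_le {n : ℕ} (hn : 1 ≤ n) {c : Rn n} {r : ℝ} (hr1 : r < 1)
    (hc : ‖c‖ < 1 / r) :
    luxPhi0Norm n (chi n (Metric.ball c r)) ≤
      ENNReal.ofReal (atomConst n) * luxPhiNorm n 1 (chi n (Metric.ball c r)) := by
  have hC : ENNReal.ofReal (atomConst n) ≠ 0 := (ENNReal.ofReal_pos.2 (atomConst_pos n)).ne'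
  refine sInf_le_mul_sInf_of_mul_mem hC ENNReal.ofReal_ne_top fun lam ⟨hpos, hint⟩ => ?_
  exact ⟨ENNReal.mul_pos hC hpos.ne', lintegral_phi0E_chi_ball_le_one hn hr1 hc hint⟩

lemma IsAtom'.inv_const_mul {n s : ℕ} {N N' : ℝ≥0∞} {B : Set (Rn n)} {a : Rn n → ℂ}
    {C : ℝ} (ha : IsAtom' n s N B a) (hC : 0 < C) (hN : N' ≤ ENNReal.ofReal C * N) :
    IsAtom' n s N' B (fun x => (C : ℂ)⁻¹ * a x) := by
  obtain ⟨hmeas, hsupp, hbound, hmom⟩ := ha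
  refine ⟨hmeas.const_mul _, fun x hx => by simp [hsupp x hx], ?_, fun α hα => ?_⟩
  · filter_upwards [hbound] with x hx
    calc (‖(C : ℂ)⁻¹ * a x‖₊ : ℝ≥0∞) = (ENNReal.ofReal C)⁻¹ * ‖a x‖₊ := by
          rw [nnnorm_mul, ENNReal.coe_mul, nnnorm_inv, Complex.nnnorm_real,
            ENNReal.coe_inv (by simp [hC.ne']), Real.nnnorm_of_nonneg hC.le, ENNReal.ofReal,
            Real.toNNReal_of_nonneg hC.le]
      _ ≤ (ENNReal.ofReal C)⁻¹ * N⁻¹ := by gcongr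
      _ = (ENNReal.ofReal C * N)⁻¹ :=
          (ENNReal.mul_inv (Or.inl (ENNReal.ofReal_pos.2 hC).ne')
            (Or.inl ENNReal.ofReal_ne_top)).symm
      _ ≤ N'⁻¹ := ENNReal.inv_le_inv.2 hN
  · simp only [mul_assoc]
    rw [integral_const_mul, hmom α hα, mul_zero]

/-- For balls with `r_B < 1` and `|c_B| < 1/r_B`, `‖χ_B‖_{L^{Φ_1}} ∼ ‖χ_B‖_{L^{φ₀}}`;
consequently every `(Φ_1,∞,s)`-atom on such a ball is, up to a uniform constant,
a `(φ₀,∞,s)`-atom. -/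
theorem statement11 (n s : ℕ) (hn : 1 ≤ n) :
    ∃ C : ℝ, 1 ≤ C ∧ ∀ (c : Rn n) (r : ℝ), 0 < r → r < 1 → ‖c‖ < 1 / r →
      (ENNReal.ofReal C⁻¹ * luxPhi0Norm n (chi n (Metric.ball c r)) ≤
          luxPhiNorm n 1 (chi n (Metric.ball c r)) ∧
        luxPhiNorm n 1 (chi n (Metric.ball c r)) ≤
          ENNReal.ofReal C * luxPhi0Norm n (chi n (Metric.ball c r))) ∧
      ∀ a : Rn n → ℂ,
        IsAtom' n s (luxPhiNorm n 1 (chi n (Metric.ball c r))) (Metric.ball c r) a →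
        IsAtom' n s (luxPhi0Norm n (chi n (Metric.ball c r))) (Metric.ball c r)
          (fun x => (C : ℂ)⁻¹ * a x) := by
  have hC := atomConst_pos n
  refine ⟨atomConst n, one_le_atomConst n, fun c r _ hr1 hc => ?_⟩
  have hlower := luxPhi0Norm_chi_ball_le hn hr1 hc
  refine ⟨⟨?_, ?_⟩, fun a ha => ha.inv_const_mul hC hlower⟩
  · rw [ENNReal.ofReal_inv_of_pos hC,
      ENNReal.inv_mul_le_iff (ENNReal.ofReal_pos.2 hC).ne' ENNReal.ofReal_ne_top]
    exact hlower
  · exact (luxPhiNorm_one_le_luxPhi0Norm n _).trans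
      (le_mul_of_one_le_left zero_le (ENNReal.one_le_ofReal.2 (one_le_atomConst n)))
end
end

section
/- Let n ≥ 1, p ∈ (0,1) and s ∈ ℕ ∪ {0} with s ≥ ⌊n(1/p-1)⌋. There exists a constant C ≥ 1, independent of the ball, such that for every ball B ⊂ ℝ^n: if a is a (Φ_p,∞,s)-atom associated with B then C^{-1}a is a (p,∞,s)_{W_p}-atom associated with B, and conversely if a is a (p,∞,s)_{W_p}-atom associated with B then C^{-1}a is a (Φ_p,∞,s)-atom associated with B. -/
open MeasureTheory Real
open scoped ENNReal Classical

noncomputable section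

/-! Writing `Φ_p(x,t) = t / (log(e+t) + t^{1-p} / W_p(x))`, one has `Φ_p(x,t) ≤ t^p W_p(x)`,
so `‖χ_B‖_{L^{Φ_p}} ≤ ‖χ_B‖_{L^p_{W_p}}`. Conversely `Φ_p(x,t) ≳ t^p W_p(x)` wherever
`W_p(x) ≤ t^{1-p}`, while the superlevel set `{W_p > t^{1-p}}` lies in the ball of radius
`t^{-1/n}`, on which `|x|^{-n(1-p)}` integrates to a multiple of `t^{-p}` by scaling. Hence
`∫_B Φ_p(x, 1/λ) ≤ 1` forces `∫_B W_p ≲ λ^p`, i.e. the two norms of `χ_B` are comparable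
uniformly in `B`. An atom for one normalisation is thus a fixed multiple of an atom for the
other: support and moment conditions do not see the normalisation. -/

open Metric Module

section HomogeneousIntegral

variable {E : Type*} [NormedAddCommGroup E] [NormedSpace ℝ E] [FiniteDimensional ℝ E]
  [MeasurableSpace E] [BorelSpace E] (μ : Measure E) [μ.IsAddHaarMeasure]

theorem lintegral_comp_smul_of_pos {f : E → ℝ≥0∞} (hf : Measurable f) {R : ℝ} (hR : 0 < R) :
    ∫⁻ x, f (R • x) ∂μ = ENNReal.ofReal R ^ (-(finrank ℝ E : ℝ)) * ∫⁻ x, f x ∂μ := by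
  rw [← lintegral_map hf (measurable_const_smul R), Measure.map_addHaar_smul μ hR.ne',
    lintegral_smul_measure, smul_eq_mul, abs_of_pos (by positivity), ENNReal.ofReal_inv_of_pos
      (by positivity), ENNReal.ofReal_pow hR.le, ← ENNReal.rpow_natCast, ← ENNReal.rpow_neg]

theorem setLIntegral_ball_enorm_rpow_neg {α R : ℝ} (hR : 0 < R) :
    ∫⁻ x in ball 0 R, ‖x‖ₑ ^ (-α) ∂μ =
      ENNReal.ofReal R ^ ((finrank ℝ E : ℝ) - α) * ∫⁻ x in ball 0 1, ‖x‖ₑ ^ (-α) ∂μ := by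
  have hR' : ENNReal.ofReal R ≠ 0 := by simpa using hR
  have hscale : ∀ x : E, (ball (0 : E) R).indicator (fun x => ‖x‖ₑ ^ (-α)) (R • x) =
      ENNReal.ofReal R ^ (-α) * (ball (0 : E) 1).indicator (fun x => ‖x‖ₑ ^ (-α)) x := by
    intro x
    have hmem : R • x ∈ ball (0 : E) R ↔ x ∈ ball (0 : E) 1 := by
      simp [norm_smul, abs_of_pos hR, hR]
    by_cases hx : x ∈ ball (0 : E) 1
    · rw [Set.indicator_of_mem (hmem.2 hx), Set.indicator_of_mem hx, enorm_smul,
        ENNReal.mul_rpow_of_ne_top enorm_ne_top enorm_ne_top, Real.enorm_of_nonneg hR.le]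
    · rw [Set.indicator_of_notMem (mt hmem.1 hx), Set.indicator_of_notMem hx, mul_zero]
  have hmeas (r : ℝ) : Measurable ((ball (0 : E) r).indicator fun x => ‖x‖ₑ ^ (-α)) :=
    (measurable_enorm.pow_const _).indicator measurableSet_ball
  have key := lintegral_comp_smul_of_pos μ (hmeas R) hR
  simp_rw [hscale] at key
  rw [lintegral_const_mul _ (hmeas 1), lintegral_indicator measurableSet_ball,
    lintegral_indicator measurableSet_ball] at key
  rw [sub_eq_add_neg, ENNReal.rpow_add _ _ hR' ENNReal.ofReal_ne_top, mul_assoc, key, ← mul_assoc,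
    ← ENNReal.rpow_add _ _ hR' ENNReal.ofReal_ne_top, add_neg_cancel, ENNReal.rpow_zero, one_mul]

theorem setLIntegral_ball_one_enorm_rpow_neg_ne_top (hd : 1 ≤ finrank ℝ E) {α : ℝ}
    (hα : α < finrank ℝ E) : ∫⁻ x in ball 0 1, ‖x‖ₑ ^ (-α) ∂μ ≠ ⊤ := by
  have : Nontrivial E := finrank_pos_iff.mp hd
  have hint : IntegrableOn (fun x : E => ‖x‖ ^ (-α)) (ball 0 1) μ :=
    integrableOn_ball_of_norm_le_rpow hd (C := 1) hα
      (ae_of_all _ fun x => by simp [abs_of_nonneg (Real.rpow_nonneg (norm_nonneg x) _)])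
      (measurable_norm.pow_const _).aestronglyMeasurable
  refine ne_of_lt (lt_of_eq_of_lt (lintegral_congr_ae ?_) hint.hasFiniteIntegral)
  filter_upwards [ae_restrict_of_ae (μ.ae_ne 0)] with x hx
  rw [Real.enorm_of_nonneg (Real.rpow_nonneg (norm_nonneg x) _),
    ← ENNReal.ofReal_rpow_of_pos (norm_pos_iff.mpr hx), ofReal_norm]

theorem setLIntegral_superlevel_le_of_le_enorm_rpow_neg {g : E → ℝ≥0∞} {α R : ℝ} (hα : 0 ≤ α)
    (hR : 0 < R) (hg : ∀ x, g x ≤ ‖x‖ₑ ^ (-α)) :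
    ∫⁻ x in {x | ENNReal.ofReal R ^ (-α) < g x}, g x ∂μ ≤
      ENNReal.ofReal R ^ ((finrank ℝ E : ℝ) - α) * ∫⁻ x in ball 0 1, ‖x‖ₑ ^ (-α) ∂μ := by
  have hsub : {x | ENNReal.ofReal R ^ (-α) < g x} ⊆ ball 0 R := by
    intro x hx
    rw [mem_ball_zero_iff]
    by_contra! hRx
    have hle : ‖x‖ₑ ^ (-α) ≤ ENNReal.ofReal R ^ (-α) := by
      rw [ENNReal.rpow_neg, ENNReal.rpow_neg]
      gcongr
      rw [← ofReal_norm]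
      exact ENNReal.ofReal_le_ofReal hRx
    exact (hx.trans_le ((hg x).trans hle)).false
  calc ∫⁻ x in {x | ENNReal.ofReal R ^ (-α) < g x}, g x ∂μ
      ≤ ∫⁻ x in ball 0 R, g x ∂μ := lintegral_mono_set hsub
    _ ≤ ∫⁻ x in ball 0 R, ‖x‖ₑ ^ (-α) ∂μ := lintegral_mono hg
    _ = _ := setLIntegral_ball_enorm_rpow_neg μ hR

end HomogeneousIntegral

section Profile

theorem one_le_log_exp_add {u : ℝ} (hu : 0 ≤ u) : 1 ≤ log (exp 1 + u) := by
  rw [le_log_iff_exp_le (by positivity)]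
  linarith

theorem rpow_mul_rpow_sub_self (p : ℝ) {t : ℝ} (ht : 0 < t) : t ^ p * t ^ (1 - p) = t := by
  rw [← rpow_add ht, add_sub_cancel, rpow_one]

theorem div_log_exp_add_add_le {p t w : ℝ} (ht : 0 ≤ t) (hw : 0 < w) :
    t / (log (exp 1 + t) + t ^ (1 - p) / w) ≤ t ^ p * w := by
  rcases ht.eq_or_lt with rfl | ht
  · simp only [zero_div]; positivity
  have hlog := one_le_log_exp_add ht.le
  calc t / (log (exp 1 + t) + t ^ (1 - p) / w)
      ≤ t / (t ^ (1 - p) / w) := by gcongr; linarith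
    _ = t ^ p * w := by
      nth_rewrite 1 [← rpow_mul_rpow_sub_self p ht]
      field_simp

theorem mul_log_exp_add_le {ε t w : ℝ} (hε : 0 < ε) (ht : 0 < t) (hw0 : 0 ≤ w) (hw1 : w ≤ 1)
    (hwt : w ≤ t ^ ε) : w * log (exp 1 + t) ≤ (exp 1 + 1) ^ ε / ε * t ^ ε := by
  have he := exp_pos 1
  have hm : w * max 1 t ^ ε ≤ t ^ ε := by
    rcases le_total t 1 with h | h
    · rw [max_eq_left h, one_rpow, mul_one]; exact hwt
    · rw [max_eq_right h]; exact mul_le_of_le_one_left (by positivity) hw1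
  have hlog : log (exp 1 + t) ≤ (exp 1 + 1) ^ ε * max 1 t ^ ε / ε := by
    calc log (exp 1 + t) ≤ (exp 1 + t) ^ ε / ε := log_le_rpow_div (by positivity) hε
      _ ≤ ((exp 1 + 1) * max 1 t) ^ ε / ε := by
        gcongr
        nlinarith [le_max_left 1 t, le_max_right 1 t]
      _ = (exp 1 + 1) ^ ε * max 1 t ^ ε / ε := by
        rw [mul_rpow (by positivity) (by positivity)]
  calc w * log (exp 1 + t) ≤ w * ((exp 1 + 1) ^ ε * max 1 t ^ ε / ε) := by gcongr
    _ = (exp 1 + 1) ^ ε / ε * (w * max 1 t ^ ε) := by ring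
    _ ≤ (exp 1 + 1) ^ ε / ε * t ^ ε := by gcongr

theorem mul_rpow_le_mul_div_log_exp_add_add {p t w : ℝ} (hp : p < 1) (ht : 0 < t) (hw0 : 0 < w)
    (hw1 : w ≤ 1) (hwt : w ≤ t ^ (1 - p)) :
    w * t ^ p ≤
      ((exp 1 + 1) ^ (1 - p) / (1 - p) + 1) * (t / (log (exp 1 + t) + t ^ (1 - p) / w)) := by
  have hlog := one_le_log_exp_add ht.le
  have hD : 0 < log (exp 1 + t) + t ^ (1 - p) / w := by positivity
  have hK := mul_log_exp_add_le (sub_pos.mpr hp) ht hw0.le hw1 hwt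
  rw [mul_div_assoc', le_div_iff₀ hD]
  calc w * t ^ p * (log (exp 1 + t) + t ^ (1 - p) / w)
      = t ^ p * (w * log (exp 1 + t)) + t ^ p * t ^ (1 - p) := by field_simp
    _ ≤ t ^ p * ((exp 1 + 1) ^ (1 - p) / (1 - p) * t ^ (1 - p)) + t ^ p * t ^ (1 - p) := by
      gcongr
    _ = ((exp 1 + 1) ^ (1 - p) / (1 - p) + 1) * t := by
      linear_combination ((exp 1 + 1) ^ (1 - p) / (1 - p) + 1) * rpow_mul_rpow_sub_self p ht

end Profile

section Weight

variable {n : ℕ} {p : ℝ}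

def logFactor (n : ℕ) (p : ℝ) (x : Rn n) : ℝ :=
  if ∃ k : ℕ, (n : ℝ) * (1 / p - 1) = k then log (exp 1 + ‖x‖) ^ p else 1

theorem one_le_logFactor (hp0 : 0 ≤ p) (x : Rn n) : 1 ≤ logFactor n p x := by
  unfold logFactor
  split_ifs
  · exact one_le_rpow (one_le_log_exp_add (norm_nonneg x)) hp0
  · exact le_rfl

theorem Wp_eq_inv (hp1 : p ≠ 1) (x : Rn n) :
    Wp n p x = ((1 + ‖x‖) ^ ((n : ℝ) * (1 - p)) * logFactor n p x)⁻¹ := by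
  have hlog : 0 ≤ log (exp 1 + ‖x‖) := zero_le_one.trans (one_le_log_exp_add (norm_nonneg x))
  unfold Wp logFactor
  rw [if_neg hp1, neg_mul, rpow_neg (by positivity)]
  split_ifs
  · rw [rpow_neg hlog, mul_inv]
  · rw [mul_one]

theorem Wp_le_rpow (hp0 : 0 ≤ p) (hp1 : p < 1) (x : Rn n) :
    Wp n p x ≤ (1 + ‖x‖) ^ (-((n : ℝ) * (1 - p))) := by
  rw [Wp_eq_inv hp1.ne x, rpow_neg (by positivity)]
  exact inv_anti₀ (by positivity)
    (le_mul_of_one_le_right (by positivity) (one_le_logFactor hp0 x))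

theorem Wp_pos (hp0 : 0 ≤ p) (hp1 : p < 1) (x : Rn n) : 0 < Wp n p x := by
  rw [Wp_eq_inv hp1.ne x]
  have := one_le_logFactor hp0 x
  positivity

theorem Wp_le_one (hp0 : 0 ≤ p) (hp1 : p < 1) (x : Rn n) : Wp n p x ≤ 1 :=
  (Wp_le_rpow hp0 hp1 x).trans
    (rpow_le_one_of_one_le_of_nonpos (by simp)
      (neg_nonpos.mpr (mul_nonneg n.cast_nonneg (by linarith))))

theorem ofReal_Wp_le_enorm_rpow (hp0 : 0 ≤ p) (hp1 : p < 1) (x : Rn n) :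
    ENNReal.ofReal (Wp n p x) ≤ ‖x‖ₑ ^ (-((n : ℝ) * (1 - p))) := by
  calc ENNReal.ofReal (Wp n p x) ≤ ENNReal.ofReal ((1 + ‖x‖) ^ (-((n : ℝ) * (1 - p)))) :=
        ENNReal.ofReal_le_ofReal (Wp_le_rpow hp0 hp1 x)
    _ = ENNReal.ofReal (1 + ‖x‖) ^ (-((n : ℝ) * (1 - p))) :=
        (ENNReal.ofReal_rpow_of_pos (by positivity)).symm
    _ ≤ ‖x‖ₑ ^ (-((n : ℝ) * (1 - p))) := by
      rw [ENNReal.rpow_neg, ENNReal.rpow_neg, ← ofReal_norm]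
      gcongr
      linarith

theorem continuous_Wp (hp0 : 0 ≤ p) (hp1 : p < 1) : Continuous (Wp n p) := by
  have hL : Continuous (logFactor n p) := by
    unfold logFactor
    split_ifs
    · exact (Continuous.log (by fun_prop) fun x => by positivity).rpow_const
        fun x => Or.inl (by linarith [one_le_log_exp_add (norm_nonneg x)])
    · exact continuous_const
  simp_rw [funext (Wp_eq_inv (n := n) hp1.ne)]
  refine ((Continuous.rpow_const (by fun_prop) fun x => Or.inl (by positivity)).mul hL).inv₀
    fun x => ?_
  have := one_le_logFactor hp0 x
  simp only [Pi.mul_apply]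
  positivity

theorem Phi_eq (hp1 : p ≠ 1) (x : Rn n) {t : ℝ} (ht : 0 ≤ t) :
    Phi n p x t = t / (log (exp 1 + t) + t ^ (1 - p) / Wp n p x) := by
  have key : (t * (1 + ‖x‖) ^ (n : ℝ)) ^ (1 - p) =
      t ^ (1 - p) * (1 + ‖x‖) ^ ((n : ℝ) * (1 - p)) := by
    rw [mul_rpow ht (by positivity), ← rpow_mul (by positivity)]
  rw [Wp_eq_inv hp1 x, div_inv_eq_mul]
  unfold Phi logFactor
  split_ifs <;> rw [key] <;> ring_nf

theorem Phi_le (hp0 : 0 ≤ p) (hp1 : p < 1) (x : Rn n) {t : ℝ} (ht : 0 ≤ t) :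
    Phi n p x t ≤ t ^ p * Wp n p x := by
  rw [Phi_eq hp1.ne x ht]
  exact div_log_exp_add_add_le ht (Wp_pos hp0 hp1 x)

theorem Wp_le_mul_Phi (hp0 : 0 ≤ p) (hp1 : p < 1) (x : Rn n) {t : ℝ} (ht : 0 < t)
    (hWt : Wp n p x ≤ t ^ (1 - p)) :
    Wp n p x ≤ ((exp 1 + 1) ^ (1 - p) / (1 - p) + 1) * t ^ (-p) * Phi n p x t := by
  have h := mul_rpow_le_mul_div_log_exp_add_add hp1 ht (Wp_pos hp0 hp1 x)
    (Wp_le_one hp0 hp1 x) hWt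
  rw [← Phi_eq hp1.ne x ht.le] at h
  calc Wp n p x = Wp n p x * t ^ p * t ^ (-p) := by
        rw [mul_assoc, ← rpow_add ht, add_neg_cancel, rpow_zero, mul_one]
    _ ≤ ((exp 1 + 1) ^ (1 - p) / (1 - p) + 1) * Phi n p x t * t ^ (-p) := by gcongr
    _ = _ := by ring

theorem setLIntegral_superlevel_Wp_le (hn : n ≠ 0) (hp0 : 0 ≤ p) (hp1 : p < 1) {t : ℝ}
    (ht : 0 < t) :
    ∫⁻ x in {x | t ^ (1 - p) < Wp n p x}, ENNReal.ofReal (Wp n p x) ≤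
      ENNReal.ofReal (t ^ (-p)) * ∫⁻ x in ball (0 : Rn n) 1, ‖x‖ₑ ^ (-((n : ℝ) * (1 - p))) := by
  have hR : 0 < t ^ (-(n : ℝ)⁻¹) := rpow_pos_of_pos ht _
  have hset : {x | t ^ (1 - p) < Wp n p x} =
      {x | ENNReal.ofReal (t ^ (-(n : ℝ)⁻¹)) ^ (-((n : ℝ) * (1 - p))) <
        ENNReal.ofReal (Wp n p x)} := by
    ext x
    rw [Set.mem_ofPred_eq, Set.mem_ofPred_eq, ENNReal.ofReal_rpow_of_pos hR, ← rpow_mul ht.le,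
      ENNReal.ofReal_lt_ofReal_iff (Wp_pos hp0 hp1 x)]
    field_simp
  rw [hset]
  refine (setLIntegral_superlevel_le_of_le_enorm_rpow_neg volume
    (mul_nonneg n.cast_nonneg (by linarith)) hR (ofReal_Wp_le_enorm_rpow hp0 hp1)).trans_eq ?_
  rw [finrank_euclideanSpace_fin, ENNReal.ofReal_rpow_of_pos hR, ← rpow_mul ht.le]
  congr 3
  field_simp
  ring

theorem exists_setLIntegral_Wp_le (hn : 1 ≤ n) (hp0 : 0 < p) (hp1 : p < 1) :
    ∃ C : ℝ≥0∞, C ≠ ⊤ ∧ ∀ (B : Set (Rn n)) (t : ℝ), 0 < t →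
      ∫⁻ x in B, ENNReal.ofReal (Phi n p x t) ≤ 1 →
      ∫⁻ x in B, ENNReal.ofReal (Wp n p x) ≤ C * ENNReal.ofReal (t ^ (-p)) := by
  set I := ∫⁻ x in ball (0 : Rn n) 1, ‖x‖ₑ ^ (-((n : ℝ) * (1 - p)))
  set K := (exp 1 + 1) ^ (1 - p) / (1 - p) + 1
  have hd : finrank ℝ (Rn n) = n := finrank_euclideanSpace_fin
  have hI : I ≠ ⊤ := setLIntegral_ball_one_enorm_rpow_neg_ne_top volume (by rwa [hd])
    (by rw [hd]; nlinarith [(Nat.one_le_cast.mpr hn : (1 : ℝ) ≤ n)])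
  refine ⟨ENNReal.ofReal K + I, ENNReal.add_ne_top.2 ⟨ENNReal.ofReal_ne_top, hI⟩,
    fun B t ht hΦ => ?_⟩
  have hWmeas : Measurable fun x => ENNReal.ofReal (Wp n p x) :=
    (continuous_Wp hp0.le hp1).measurable.ennreal_ofReal
  set E := {x : Rn n | t ^ (1 - p) < Wp n p x}
  have hpt : ∀ x, ENNReal.ofReal (Wp n p x) ≤ ENNReal.ofReal (K * t ^ (-p)) *
      ENNReal.ofReal (Phi n p x t) + E.indicator (fun x => ENNReal.ofReal (Wp n p x)) x := by
    intro x
    by_cases hx : x ∈ E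
    · rw [Set.indicator_of_mem hx]
      exact le_add_self
    · rw [Set.indicator_of_notMem hx, add_zero, ← ENNReal.ofReal_mul (by positivity)]
      exact ENNReal.ofReal_le_ofReal (Wp_le_mul_Phi hp0.le hp1 x ht (not_lt.mp hx))
  calc ∫⁻ x in B, ENNReal.ofReal (Wp n p x)
      ≤ ∫⁻ x in B, (ENNReal.ofReal (K * t ^ (-p)) * ENNReal.ofReal (Phi n p x t) +
          E.indicator (fun x => ENNReal.ofReal (Wp n p x)) x) := lintegral_mono hpt
    _ = ENNReal.ofReal (K * t ^ (-p)) * (∫⁻ x in B, ENNReal.ofReal (Phi n p x t)) +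
          ∫⁻ x in B, E.indicator (fun x => ENNReal.ofReal (Wp n p x)) x := by
      rw [lintegral_add_right _ (hWmeas.indicator (measurableSet_lt measurable_const
        (continuous_Wp hp0.le hp1).measurable)), lintegral_const_mul' _ _ ENNReal.ofReal_ne_top]
    _ ≤ ENNReal.ofReal (K * t ^ (-p)) * 1 + ∫⁻ x in E, ENNReal.ofReal (Wp n p x) :=
      add_le_add (by gcongr) ((setLIntegral_le_lintegral _ _).trans (lintegral_indicator_le _ _))
    _ ≤ ENNReal.ofReal (K * t ^ (-p)) * 1 + ENNReal.ofReal (t ^ (-p)) * I := by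
      gcongr
      exact setLIntegral_superlevel_Wp_le (by omega) hp0.le hp1 ht
    _ = (ENNReal.ofReal K + I) * ENNReal.ofReal (t ^ (-p)) := by
      rw [mul_one, ENNReal.ofReal_mul (by positivity)]
      ring

theorem Phi_zero (x : Rn n) : Phi n p x 0 = 0 := by
  unfold Phi
  split_ifs <;> rw [zero_div]

theorem lintegral_PhiE_chi_div {B : Set (Rn n)} (hB : MeasurableSet B) {lam : ℝ≥0∞}
    (hlam : lam ≠ 0) :
    ∫⁻ x, PhiE n p x (chi n B x / lam) = ∫⁻ x in B, ENNReal.ofReal (Phi n p x lam.toReal⁻¹) := by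
  rw [← lintegral_indicator hB]
  congr 1 with x
  by_cases hx : x ∈ B
  · simp [chi, PhiE, hx, hlam]
  · simp [chi, PhiE, hx, Phi_zero]

theorem wNorm_chi (hp0 : 0 < p) {B : Set (Rn n)} (hB : MeasurableSet B) :
    wNorm n p (chi n B) = (∫⁻ x in B, ENNReal.ofReal (Wp n p x)) ^ (1 / p) := by
  rw [wNorm, ← lintegral_indicator hB]
  congr 2 with x
  by_cases hx : x ∈ B
  · simp [chi, hx]
  · simp [chi, hx, ENNReal.zero_rpow_of_pos hp0]

theorem setLIntegral_Wp_pos (hp0 : 0 ≤ p) (hp1 : p < 1) {B : Set (Rn n)} (hB : volume B ≠ 0) :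
    0 < ∫⁻ x in B, ENNReal.ofReal (Wp n p x) := by
  rw [setLIntegral_pos_iff (continuous_Wp hp0 hp1).measurable.ennreal_ofReal]
  have : Function.support (fun x => ENNReal.ofReal (Wp n p x)) = Set.univ :=
    Set.eq_univ_of_forall fun x => (ENNReal.ofReal_pos.mpr (Wp_pos hp0 hp1 x)).ne'
  rwa [this, Set.univ_inter, pos_iff_ne_zero]

theorem setLIntegral_Wp_ne_top (hp0 : 0 ≤ p) (hp1 : p < 1) {B : Set (Rn n)}
    (hB : volume B ≠ ⊤) : ∫⁻ x in B, ENNReal.ofReal (Wp n p x) ≠ ⊤ := by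
  refine ne_top_of_le_ne_top hB ((setLIntegral_mono measurable_const fun x _ => ?_).trans_eq
    (setLIntegral_one B))
  exact ENNReal.ofReal_le_one.mpr (Wp_le_one hp0 hp1 x)

theorem luxPhiNorm_chi_le_wNorm_chi (hp0 : 0 < p) (hp1 : p < 1) {B : Set (Rn n)}
    (hB : MeasurableSet B) (hB0 : volume B ≠ 0) (hBtop : volume B ≠ ⊤) :
    luxPhiNorm n p (chi n B) ≤ wNorm n p (chi n B) := by
  set S := ∫⁻ x in B, ENNReal.ofReal (Wp n p x)
  have hS0 : S ≠ 0 := (setLIntegral_Wp_pos hp0.le hp1 hB0).ne'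
  have hStop : S ≠ ⊤ := setLIntegral_Wp_ne_top hp0.le hp1 hBtop
  have hSr : 0 < S.toReal := ENNReal.toReal_pos hS0 hStop
  have hlam : 0 < S ^ (1 / p) := ENNReal.rpow_pos (pos_iff_ne_zero.mpr hS0) hStop
  set t := (S ^ (1 / p)).toReal⁻¹
  have ht : t ^ p = S.toReal⁻¹ := by
    simp only [t]
    rw [← ENNReal.toReal_rpow, inv_rpow (by positivity), ← rpow_mul hSr.le,
      one_div_mul_cancel hp0.ne', rpow_one]
  rw [wNorm_chi hp0 hB]
  refine sInf_le ⟨hlam, ?_⟩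
  calc ∫⁻ x, PhiE n p x (chi n B x / S ^ (1 / p))
      = ∫⁻ x in B, ENNReal.ofReal (Phi n p x t) := lintegral_PhiE_chi_div hB hlam.ne'
    _ ≤ ∫⁻ x in B, ENNReal.ofReal (t ^ p) * ENNReal.ofReal (Wp n p x) :=
      lintegral_mono fun x => by
        rw [← ENNReal.ofReal_mul (by positivity)]
        exact ENNReal.ofReal_le_ofReal (Phi_le hp0.le hp1 x (by positivity))
    _ = 1 := by
      rw [lintegral_const_mul' _ _ ENNReal.ofReal_ne_top, ht, ENNReal.ofReal_inv_of_pos hSr,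
        ENNReal.ofReal_toReal hStop, ENNReal.inv_mul_cancel hS0 hStop]

theorem exists_wNorm_chi_le_mul_luxPhiNorm_chi (hn : 1 ≤ n) (hp0 : 0 < p) (hp1 : p < 1) :
    ∃ C : ℝ, 1 ≤ C ∧ ∀ B : Set (Rn n), MeasurableSet B →
      wNorm n p (chi n B) ≤ ENNReal.ofReal C * luxPhiNorm n p (chi n B) := by
  obtain ⟨C, hCtop, hC⟩ := exists_setLIntegral_Wp_le hn hp0 hp1
  refine ⟨max 1 (C ^ (1 / p)).toReal, le_max_left _ _, fun B hB => ?_⟩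
  have hC' : C ^ (1 / p) ≤ ENNReal.ofReal (max 1 (C ^ (1 / p)).toReal) :=
    (ENNReal.le_ofReal_iff_toReal_le (ENNReal.rpow_ne_top_of_nonneg (by positivity) hCtop)
      (by positivity)).mpr (le_max_right _ _)
  have hC0 : ENNReal.ofReal (max 1 (C ^ (1 / p)).toReal) ≠ 0 := by simp
  rw [mul_comm, ← ENNReal.div_le_iff hC0 ENNReal.ofReal_ne_top]
  refine le_sInf fun lam ⟨hlam0, hlam⟩ => ENNReal.div_le_of_le_mul' ?_
  rcases eq_or_ne lam ⊤ with rfl | hlamtop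
  · simp
  have hl : 0 < lam.toReal := ENNReal.toReal_pos hlam0.ne' hlamtop
  have hS := hC B lam.toReal⁻¹ (inv_pos.mpr hl) (lintegral_PhiE_chi_div hB hlam0.ne' ▸ hlam)
  rw [inv_rpow hl.le, ← rpow_neg hl.le, neg_neg, ← ENNReal.ofReal_rpow_of_pos hl,
    ENNReal.ofReal_toReal hlamtop] at hS
  rw [wNorm_chi hp0 hB]
  calc (∫⁻ x in B, ENNReal.ofReal (Wp n p x)) ^ (1 / p) ≤ (C * lam ^ p) ^ (1 / p) := by gcongr
    _ = C ^ (1 / p) * lam := by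
      rw [ENNReal.mul_rpow_of_nonneg _ _ (by positivity), one_div, ENNReal.rpow_rpow_inv hp0.ne']
    _ ≤ _ := by gcongr

end Weight

theorem IsAtom'.const_inv_mul {n s : ℕ} {N₁ N₂ : ℝ≥0∞} {B : Set (Rn n)} {a : Rn n → ℂ} {C : ℝ}
    (ha : IsAtom' n s N₁ B a) (hC : 0 < C) (hN : N₂ ≤ ENNReal.ofReal C * N₁) :
    IsAtom' n s N₂ B (fun x => (C : ℂ)⁻¹ * a x) := by
  obtain ⟨hmeas, hsupp, hbound, hmom⟩ := ha
  refine ⟨hmeas.const_mul _, fun x hx => by simp [hsupp x hx], ?_, fun α hα => ?_⟩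
  · filter_upwards [hbound] with x hx
    calc (‖(C : ℂ)⁻¹ * a x‖₊ : ℝ≥0∞) = (ENNReal.ofReal C)⁻¹ * ‖a x‖₊ := by
          rw [← enorm_eq_nnnorm, enorm_mul, ← ofReal_norm, norm_inv, Complex.norm_real,
            Real.norm_of_nonneg hC.le, ENNReal.ofReal_inv_of_pos hC, enorm_eq_nnnorm]
      _ ≤ (ENNReal.ofReal C)⁻¹ * N₁⁻¹ := by gcongr
      _ = (ENNReal.ofReal C * N₁)⁻¹ := (ENNReal.mul_inv (by simp [hC]) (by simp)).symm
      _ ≤ N₂⁻¹ := ENNReal.inv_le_inv.mpr hN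
  · simp_rw [mul_assoc]
    rw [integral_const_mul, hmom α hα, mul_zero]

theorem statement13_general (n : ℕ) (hn : 1 ≤ n) (p : ℝ) (hp0 : 0 < p) (hp1 : p < 1) (s : ℕ) :
    ∃ C : ℝ, 1 ≤ C ∧ ∀ (c : Rn n) (r : ℝ), 0 < r →
      (∀ a : Rn n → ℂ,
        IsAtom' n s (luxPhiNorm n p (chi n (Metric.ball c r))) (Metric.ball c r) a →
        IsAtom' n s (wNorm n p (chi n (Metric.ball c r))) (Metric.ball c r)
          (fun x => (C : ℂ)⁻¹ * a x)) ∧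
      (∀ a : Rn n → ℂ,
        IsAtom' n s (wNorm n p (chi n (Metric.ball c r))) (Metric.ball c r) a →
        IsAtom' n s (luxPhiNorm n p (chi n (Metric.ball c r))) (Metric.ball c r)
          (fun x => (C : ℂ)⁻¹ * a x)) := by
  obtain ⟨C, hC1, hwNorm⟩ := exists_wNorm_chi_le_mul_luxPhiNorm_chi hn hp0 hp1
  have hC0 : 0 < C := zero_lt_one.trans_le hC1
  refine ⟨C, hC1, fun c r hr => ⟨fun a ha => ha.const_inv_mul hC0 (hwNorm _ measurableSet_ball),
    fun a ha => ha.const_inv_mul hC0 ?_⟩⟩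
  calc luxPhiNorm n p (chi n (ball c r)) ≤ wNorm n p (chi n (ball c r)) :=
        luxPhiNorm_chi_le_wNorm_chi hp0 hp1 measurableSet_ball (measure_ball_pos _ c hr).ne'
          measure_ball_lt_top.ne
    _ ≤ ENNReal.ofReal C * wNorm n p (chi n (ball c r)) :=
        le_mul_of_one_le_left' (ENNReal.one_le_ofReal.mpr hC1)

/-- For `p ∈ (0,1)` and `s ≥ ⌊n(1/p-1)⌋`, `(Φ_p,∞,s)`-atoms and `(p,∞,s)_{W_p}`-atoms
coincide up to a uniform constant. -/
theorem statement13 (n : ℕ) (hn : 1 ≤ n) (p : ℝ) (hp0 : 0 < p) (hp1 : p < 1)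
    (s : ℕ) (hs : ⌊(n : ℝ) * (1 / p - 1)⌋₊ ≤ s) :
    ∃ C : ℝ, 1 ≤ C ∧ ∀ (c : Rn n) (r : ℝ), 0 < r →
      (∀ a : Rn n → ℂ,
        IsAtom' n s (luxPhiNorm n p (chi n (Metric.ball c r))) (Metric.ball c r) a →
        IsAtom' n s (wNorm n p (chi n (Metric.ball c r))) (Metric.ball c r)
          (fun x => (C : ℂ)⁻¹ * a x)) ∧
      (∀ a : Rn n → ℂ,
        IsAtom' n s (wNorm n p (chi n (Metric.ball c r))) (Metric.ball c r) a →
        IsAtom' n s (luxPhiNorm n p (chi n (Metric.ball c r))) (Metric.ball c r)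
          (fun x => (C : ℂ)⁻¹ * a x)) :=
  statement13_general n hn p hp0 hp1 s
end
end
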